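/- The number 30 is the least positive integer n such that every subgraph G of the complete bipartite graph K_{7,n} contains a copy of K_{2,2} or has a copy of K_{5,5} in its bipartite complement, and likewise 30 is the least such integer for K_{8,n}; that is, BR_7(K_{2,2}, K_{5,5}) = BR_8(K_{2,2}, K_{5,5}) = 30. -/

import Mathlib

/-!
Let `c S` count the vertices of `Y` whose neighbourhood is exactly `S ⊆ X`. Without a `K_{2,2}`
every pair of `X` lies in at most one neighbourhood, so `∑ c S * C(#S, 2) ≤ C(7, 2) = 21` and
`c S ≤ 1` for `#S = 2`; without a `K_{5,5}` in the complement at most 4 neighbourhoods lie inside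
any pair `{i, j}`. With `a = c ∅` and `b i = c {i}`, the pair `{i, j}` is then not a neighbourhood
as soon as `a + b i + b j = 4`, and a case analysis on the heaviest `b i` leaves room for at most
29 vertices in `Y`.

Conversely, on 8 vertices the 28 pairs together with `{0}` form 29 neighbourhoods, any two of
which share at most one vertex and at most 4 of which fit inside a 3-set; deleting a vertex of `X`
keeps both properties.
-/

/-- A subgraph of the complete bipartite graph `K_{m,n}` is identified with its
edge set, a finset of pairs `(x, y)` with `x` in the part `X = Fin m` and
`y` in the part `Y = Fin n`.  `bContains s t E` says that the bipartite graph
with edge set `E` contains a copy of `K_{s,t}`: there are `s` distinct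
vertices of `X` and `t` distinct vertices of `Y` with all pairs present. -/
def bContains {m n : ℕ} (s t : ℕ) (E : Finset (Fin m × Fin n)) : Prop :=
  ∃ (A : Finset (Fin m)) (B : Finset (Fin n)),
    A.card = s ∧ B.card = t ∧ ∀ x ∈ A, ∀ y ∈ B, (x, y) ∈ E

/-- The bipartite complement: edge set `(X × Y) \ E`. -/
def bCompl {m n : ℕ} (E : Finset (Fin m × Fin n)) : Finset (Fin m × Fin n) :=
  Finset.univ \ E

/-- The neighborhood `N_G(x) ⊆ Y` of a vertex `x ∈ X`. -/
def bNbhd {m n : ℕ} (E : Finset (Fin m × Fin n)) (x : Fin m) : Finset (Fin n) :=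
  Finset.univ.filter (fun y => (x, y) ∈ E)

/-- The degree of a vertex `x ∈ X`. -/
def bDeg {m n : ℕ} (E : Finset (Fin m × Fin n)) (x : Fin m) : ℕ :=
  (bNbhd E x).card

/-- `Δ(G_X)`: the maximum degree over the vertices of the part `X`. -/
def bMaxDegX {m n : ℕ} (E : Finset (Fin m × Fin n)) : ℕ :=
  Finset.univ.sup (fun x => bDeg E x)

open Finset

section Basic

variable {m n : ℕ}

def bNbhdY (E : Finset (Fin m × Fin n)) (y : Fin n) : Finset (Fin m) :=
  {x | (x, y) ∈ E}

@[simp]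
lemma mem_bNbhdY {E : Finset (Fin m × Fin n)} {x : Fin m} {y : Fin n} :
    x ∈ bNbhdY E y ↔ (x, y) ∈ E := by
  simp [bNbhdY]

lemma bNbhdY_bCompl (E : Finset (Fin m × Fin n)) (y : Fin n) :
    bNbhdY (bCompl E) y = (bNbhdY E y)ᶜ := by
  ext x
  simp [bCompl]

lemma bContains_iff_exists_card_le (s t : ℕ) (E : Finset (Fin m × Fin n)) :
    bContains s t E ↔ ∃ A : Finset (Fin m), #A = s ∧ t ≤ #{y | A ⊆ bNbhdY E y} := by
  constructor
  · rintro ⟨A, B, rfl, rfl, hAB⟩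
    refine ⟨A, rfl, card_le_card fun y hy => ?_⟩
    simpa [subset_iff] using fun x hx => hAB x hx y hy
  · rintro ⟨A, rfl, ht⟩
    obtain ⟨B, hB, rfl⟩ := exists_subset_card_eq ht
    refine ⟨A, B, rfl, rfl, fun x hx y hy => ?_⟩
    simpa using (mem_filter.1 (hB hy)).2 hx

lemma bContains_bCompl_iff (s t : ℕ) (E : Finset (Fin m × Fin n)) :
    bContains s t (bCompl E) ↔
      ∃ A : Finset (Fin m), #A = s ∧ t ≤ #{y | Disjoint A (bNbhdY E y)} := by
  simp only [bContains_iff_exists_card_le, bNbhdY_bCompl, subset_compl_iff_disjoint_right]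

lemma bContains.map {m' n' s t : ℕ} {E : Finset (Fin m × Fin n)} {E' : Finset (Fin m' × Fin n')}
    (φ : Fin m ↪ Fin m') (ψ : Fin n ↪ Fin n') (hE : ∀ x y, (x, y) ∈ E → (φ x, ψ y) ∈ E')
    (h : bContains s t E) : bContains s t E' := by
  obtain ⟨A, B, hA, hB, hAB⟩ := h
  refine ⟨A.map φ, B.map ψ, by simpa using hA, by simpa using hB, ?_⟩
  simp only [mem_map]
  rintro _ ⟨x, hx, rfl⟩ _ ⟨y, hy, rfl⟩
  exact hE x y (hAB x hx y hy)

end Basic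

/-- `K_{m,n} → (K_{s,t}, K_{u,v})` in the bipartite Ramsey arrow notation. -/
def BipartiteArrows (s t u v m n : ℕ) : Prop :=
  ∀ E : Finset (Fin m × Fin n), bContains s t E ∨ bContains u v (bCompl E)

lemma BipartiteArrows.mono {s t u v m n m' n' : ℕ} (h : BipartiteArrows s t u v m n)
    (hm : m ≤ m') (hn : n ≤ n') : BipartiteArrows s t u v m' n' := by
  intro E'
  let φ := Fin.castLEEmb hm
  let ψ := Fin.castLEEmb hn
  have hmem : ∀ x y, (x, y) ∈ ({p | (φ p.1, ψ p.2) ∈ E'} : Finset (Fin m × Fin n)) ↔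
      (φ x, ψ y) ∈ E' := by simp
  refine (h _).imp (bContains.map φ ψ fun x y => (hmem x y).1)
    (bContains.map φ ψ fun x y => ?_)
  simp only [bCompl, mem_sdiff, mem_univ, true_and, hmem, imp_self]

section ColumnProfile

variable {m n : ℕ} (E : Finset (Fin m × Fin n))

def colCount (S : Finset (Fin m)) : ℕ :=
  #{y | bNbhdY E y = S}

lemma sum_colCount : ∑ S, colCount E S = n := by
  simpa [colCount] using (card_eq_sum_card_fiberwise (f := bNbhdY E) (s := univ) (t := univ)
    fun _ _ => mem_univ _).symm

lemma sum_colCount_powerset (S : Finset (Fin m)) :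
    ∑ T ∈ S.powerset, colCount E T = #{y | bNbhdY E y ⊆ S} := by
  rw [card_eq_sum_card_fiberwise (f := bNbhdY E) (t := S.powerset) (by simp [Set.MapsTo])]
  refine sum_congr rfl fun T hT => ?_
  rw [colCount, filter_filter]
  refine congrArg card (filter_congr fun y _ => ?_)
  simp only [iff_and_self]
  rintro rfl
  exact mem_powerset.1 hT

lemma sum_colCount_mul_choose (k : ℕ) :
    ∑ S, colCount E S * (#S).choose k =
      ∑ P ∈ powersetCard k univ, #{y | P ⊆ bNbhdY E y} := by
  calc ∑ S, colCount E S * (#S).choose k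
      = ∑ y, (#(bNbhdY E y)).choose k := by
        rw [← sum_fiberwise' univ (bNbhdY E) fun S => (#S).choose k]
        refine sum_congr rfl fun S _ => ?_
        rw [sum_const, smul_eq_mul, colCount]
    _ = ∑ y, #((powersetCard k univ).bipartiteAbove (fun y P => P ⊆ bNbhdY E y) y) := by
        refine sum_congr rfl fun y _ => ?_
        rw [← card_powersetCard, bipartiteAbove]
        congr 1
        ext P
        simp [and_comm]
    _ = _ := sum_card_bipartiteAbove_eq_sum_card_bipartiteBelow _

end ColumnProfile

lemma three_mul_add_sum_le_of_blocked (a : ℕ) (b : Fin 7 → ℕ) (Z : Finset (Finset (Fin 7)))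
    (hpair : ∀ i j, i ≠ j → a + b i + b j ≤ 4)
    (hZ : ∀ i j, i ≠ j → a + b i + b j = 4 → {i, j} ∈ Z) :
    3 * (a + ∑ i, b i) ≤ 26 + 2 * #Z := by
  -- Either two indices have `b ≥ 2`, which forces `a = 0` and puts every pair inside `{b = 2}`
  -- into `Z`, or `b j ≤ 1` away from a maximiser `i₀`, and then `{i₀, j} ∈ Z` when `b j = 1`
  -- as soon as `a + b i₀ ≥ 3`.
  obtain ⟨i₀, -, hi₀⟩ := exists_max_image univ b univ_nonempty
  by_cases hK : ∃ j ≠ i₀, 2 ≤ b j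
  · obtain ⟨j, hj, hbj⟩ := hK
    have hi₀j := hpair i₀ j hj.symm
    have hbi₀ := hi₀ j (mem_univ _)
    have hb_le : ∀ i, b i ≤ 2 := fun i => (hi₀ i (mem_univ _)).trans (by omega)
    set K : Finset (Fin 7) := {i | b i = 2}
    have hk : 2 ≤ #K := one_lt_card.2 ⟨i₀, by simp [K]; omega, j, by simp [K]; omega, hj.symm⟩
    have hZK : #(powersetCard 2 K) ≤ #Z := by
      refine card_le_card fun S hS => ?_
      obtain ⟨hSK, hS2⟩ := mem_powersetCard.1 hS
      obtain ⟨i, i', hii', rfl⟩ := card_eq_two.1 hS2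
      have hi : b i = 2 := by simpa [K] using hSK (mem_insert_self _ _)
      have hi' : b i' = 2 := by simpa [K] using hSK (mem_insert_of_mem (mem_singleton_self _))
      exact hZ i i' hii' (by omega)
    have hsum : ∑ i, b i ≤ 7 + #K :=
      calc ∑ i, b i ≤ ∑ i, (1 + if b i = 2 then 1 else 0) :=
            sum_le_sum fun i _ => by have := hb_le i; split_ifs <;> omega
        _ = 7 + #K := by rw [sum_add_distrib, sum_boole]; simp [K]
    have hk7 : #K ≤ 7 := card_le_univ K |>.trans (by simp)
    have hchoose : 21 + 3 * #K ≤ 26 + 2 * (#K).choose 2 := by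
      interval_cases #K <;> decide
    rw [card_powersetCard] at hZK
    omega
  · push Not at hK
    set T : Finset (Fin 7) := {j ∈ univ.erase i₀ | b j = 1}
    have hsum : ∑ i, b i ≤ b i₀ + #T := by
      rw [← add_sum_erase _ _ (mem_univ i₀), add_le_add_iff_left, card_filter]
      exact sum_le_sum fun j hj => by
        have := hK j (ne_of_mem_erase hj); split_ifs <;> omega
    have hT : #T ≤ 6 := (card_filter_le _ _).trans (by simp)
    obtain ⟨j, hj⟩ := exists_ne i₀
    have := hpair i₀ j hj.symm
    by_cases h3 : a + b i₀ ≤ 2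
    · omega
    · have hZT : #T ≤ #Z := by
        refine card_le_card_of_injOn (fun j => {i₀, j}) (fun j hj => ?_) fun j hj j' hj' h => ?_
        · obtain ⟨hji₀, hbj⟩ := mem_filter.1 (mem_coe.1 hj)
          have := hpair i₀ j (ne_of_mem_erase hji₀).symm
          exact hZ i₀ j (ne_of_mem_erase hji₀).symm (by omega)
        · have hji₀ := ne_of_mem_erase (mem_filter.1 (mem_coe.1 hj)).1
          have h : ({i₀, j} : Finset (Fin 7)) = {i₀, j'} := h
          have : j ∈ ({i₀, j'} : Finset (Fin 7)) := h ▸ mem_insert_of_mem (mem_singleton_self j)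
          simpa [hji₀] using this
      omega

lemma sum_le_of_colProfile (c : Finset (Fin 7) → ℕ)
    (hchoose : ∑ S, c S * (#S).choose 2 ≤ 21)
    (hpair : ∀ S : Finset (Fin 7), #S = 2 → c S ≤ 1)
    (hsmall : ∀ i j, i ≠ j → c ∅ + c {i} + c {j} + c {i, j} ≤ 4) :
    ∑ S, c S ≤ 29 := by
  have hsplit (f : Finset (Fin 7) → ℕ) :
      ∑ S, f S = ∑ j ∈ range 8, ∑ S ∈ powersetCard j univ, f S := by
    rw [← powerset_univ, sum_powerset, card_univ, Fintype.card_fin]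
  set N : ℕ → ℕ := fun j => ∑ S ∈ powersetCard j univ, c S
  have hN0 : N 0 = c ∅ := by simp [N]
  have hN1 : N 1 = ∑ i, c {i} := by simp [N, powersetCard_one]
  have hweighted : ∑ S, c S * (#S).choose 2 = ∑ j ∈ range 8, N j * j.choose 2 := by
    rw [hsplit]
    refine sum_congr rfl fun j _ => ?_
    rw [sum_mul]
    exact sum_congr rfl fun S hS => by rw [(mem_powersetCard.1 hS).2]
  set Z : Finset (Finset (Fin 7)) := {S ∈ powersetCard 2 univ | c S = 0}
  have hN2 : N 2 + #Z ≤ 21 := by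
    have hZc : #Z + #{S ∈ powersetCard 2 univ | c S ≠ 0} = 21 := by
      rw [card_filter_add_card_filter_not, card_powersetCard]; rfl
    have : N 2 ≤ #{S ∈ powersetCard 2 univ | c S ≠ 0} := by
      rw [show N 2 = _ from (sum_filter_ne_zero _).symm, card_eq_sum_ones]
      exact sum_le_sum fun S hS => hpair S (mem_powersetCard.1 (mem_filter.1 hS).1).2
    omega
  have hkey := three_mul_add_sum_le_of_blocked (c ∅) (fun i => c {i}) Z
    (fun i j hij => by have := hsmall i j hij; omega)
    (fun i j hij h4 => by
      have := hsmall i j hij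
      exact mem_filter.2 ⟨mem_powersetCard.2 ⟨subset_univ _, card_pair hij⟩, by omega⟩)
  rw [hsplit, show ∑ j ∈ range 8, ∑ S ∈ powersetCard j univ, c S = ∑ j ∈ range 8, N j from rfl]
  rw [hweighted] at hchoose
  simp only [sum_range_succ, range_zero, sum_empty] at hchoose ⊢
  simp only [Nat.choose] at hchoose
  -- `3 * (N 2 + N₃₊) ≤ 2 * N 2 + 21 ≤ 63 - 2 * #Z`, where `N₃₊` counts neighbourhoods of size ≥ 3
  omega

theorem bipartiteArrows_seven_thirty : BipartiteArrows 2 2 5 5 7 30 := by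
  intro E
  by_contra! h
  rw [bContains_bCompl_iff, bContains_iff_exists_card_le] at h
  simp only [not_exists, not_and, not_le] at h
  obtain ⟨h22, h55⟩ := h
  have hprofile := sum_le_of_colProfile (colCount E) ?_ ?_ ?_
  · rw [sum_colCount] at hprofile
    omega
  · rw [sum_colCount_mul_choose]
    calc ∑ P ∈ powersetCard 2 univ, #{y | P ⊆ bNbhdY E y}
        ≤ ∑ P ∈ powersetCard 2 (univ : Finset (Fin 7)), 1 :=
          sum_le_sum fun P hP => Nat.lt_succ_iff.1 (h22 P (mem_powersetCard.1 hP).2)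
      _ = 21 := by simp; rfl
  · intro S hS
    refine (card_le_card fun y hy => ?_).trans (Nat.lt_succ_iff.1 (h22 S hS))
    simp only [mem_filter, mem_univ, true_and] at hy ⊢
    exact hy.ge
  · intro i j hij
    have hsum : ∑ T ∈ ({i, j} : Finset (Fin 7)).powerset, colCount E T =
        colCount E ∅ + colCount E {i} + colCount E {j} + colCount E {i, j} := by
      rw [sum_powerset_insert (notMem_singleton.2 hij), ← insert_empty_eq j,
        sum_powerset_insert (notMem_empty j), sum_powerset_insert (notMem_empty j)]
      simp only [powerset_empty, sum_singleton, insert_empty_eq]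
      ring
    have hcompl : #({i, j} : Finset (Fin 7))ᶜ = 5 := by
      rw [card_compl, card_pair hij]; rfl
    have := h55 _ hcompl
    simp only [disjoint_compl_left_iff] at this
    rw [← hsum, sum_colCount_powerset]
    omega

theorem not_bipartiteArrows_of_family {s t u v m : ℕ} (F : Finset (Finset (Fin m)))
    (hst : ∀ A : Finset (Fin m), #A = s → #{T ∈ F | A ⊆ T} < t)
    (huv : ∀ A : Finset (Fin m), #A = u → #{T ∈ F | Disjoint A T} < v) :
    ¬ BipartiteArrows s t u v m #F := by
  let col : Fin #F → Finset (Fin m) := fun y => F.equivFin.symm y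
  let E : Finset (Fin m × Fin #F) := {p | p.1 ∈ col p.2}
  have hcount (p : Finset (Fin m) → Prop) [DecidablePred p] :
      #{y | p (bNbhdY E y)} = #{T ∈ F | p T} := by
    have hN (y : Fin #F) : bNbhdY E y = col y := by ext; simp [E]
    simp only [hN]
    refine card_bij (fun y _ => col y) (fun y hy => ?_) (fun y _ y' _ h => ?_) fun T hT => ?_
    · exact mem_filter.2 ⟨(F.equivFin.symm y).2, (mem_filter.1 hy).2⟩
    · exact F.equivFin.symm.injective (Subtype.ext h)
    · obtain ⟨hTF, hpT⟩ := mem_filter.1 hT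
      exact ⟨F.equivFin ⟨T, hTF⟩, by simpa [col] using hpT, by simp [col]⟩
  intro h
  rcases h E with h | h
  · obtain ⟨A, hA, ht⟩ := (bContains_iff_exists_card_le s t E).1 h
    exact (hst A hA).not_ge (hcount (A ⊆ ·) ▸ ht)
  · obtain ⟨A, hA, hv⟩ := (bContains_bCompl_iff u v E).1 h
    exact (huv A hA).not_ge (hcount (Disjoint A) ▸ hv)

theorem not_bipartiteArrows_eight_twentynine : ¬ BipartiteArrows 2 2 5 5 8 29 := by
  let F : Finset (Finset (Fin 8)) := insert {0} (powersetCard 2 univ)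
  have hF : #F = 29 := by
    rw [card_insert_of_notMem (by simp), card_powersetCard]
    rfl
  refine hF ▸ not_bipartiteArrows_of_family F (fun A hA => ?_) fun A hA => ?_
  · suffices {T ∈ F | A ⊆ T} ⊆ {A} from (card_le_card this).trans_lt (by simp)
    intro T hT
    obtain ⟨hTF, hAT⟩ := mem_filter.1 hT
    rcases mem_insert.1 hTF with rfl | hT2
    · have := card_le_card hAT
      simp at this
      omega
    · refine mem_singleton.2 (eq_of_subset_of_card_le hAT ?_).symm
      rw [hA, (mem_powersetCard.1 hT2).2]
  · suffices {T ∈ F | Disjoint A T} ⊆ insert {0} (powersetCard 2 Aᶜ) by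
      refine (card_le_card this).trans_lt ((card_insert_le _ _).trans_lt ?_)
      rw [card_powersetCard, card_compl, hA]
      decide
    intro T hT
    obtain ⟨hTF, hAT⟩ := mem_filter.1 hT
    rcases mem_insert.1 hTF with rfl | hT2
    · exact mem_insert_self _ _
    · exact mem_insert_of_mem (mem_powersetCard.2
        ⟨subset_compl_iff_disjoint_left.2 hAT, (mem_powersetCard.1 hT2).2⟩)

theorem stmt_8 :
    IsLeast {n : ℕ | 0 < n ∧ ∀ E : Finset (Fin 7 × Fin n),
      bContains 2 2 E ∨ bContains 5 5 (bCompl E)} 30 ∧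
    IsLeast {n : ℕ | 0 < n ∧ ∀ E : Finset (Fin 8 × Fin n),
      bContains 2 2 E ∨ bContains 5 5 (bCompl E)} 30 := by
  have hlower (m : ℕ) (hm : m ≤ 8) :
      30 ∈ lowerBounds {n : ℕ | 0 < n ∧ BipartiteArrows 2 2 5 5 m n} := fun n hn => by
    by_contra! hn30
    exact not_bipartiteArrows_eight_twentynine (hn.2.mono hm (by omega))
  exact ⟨⟨⟨by norm_num, bipartiteArrows_seven_thirty⟩, hlower 7 (by norm_num)⟩,
    ⟨⟨by norm_num, bipartiteArrows_seven_thirty.mono (by norm_num) le_rfl⟩, hlower 8 le_rfl⟩⟩
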